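/- arXiv:1605.00797 — 3 statements merged into one kernel-verified Lean document; each statement's English description precedes it below -/
import Mathlib

section
/- Let G be a subgroup of Sym(Ω) for a finite set Ω, generated by elements g₁,…,g_m, acting transitively on Ω. Suppose G contains a subgroup U such that U fixes every point of Ω∖Y pointwise and U induces the full alternating group on a subset Y ⊆ Ω with |Y| ≥ 5. If for each generator g_i there exists a point y ∈ Y with g_i(y) ∈ Y, then G contains the alternating group Alt(Ω). -/
namespace Stmt0Aux

open Equiv Equiv.Perm Finset

variable {Ω : Type*} [DecidableEq Ω]

/-- The 3-cycle `(a b c)`. -/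
def c3 (a b c : Ω) : Equiv.Perm Ω := Equiv.swap a b * Equiv.swap b c

lemma c3_apply_a {a b c : Ω} (hab : a ≠ b) (hac : a ≠ c) : c3 a b c a = b := by
  simp [c3, Equiv.Perm.mul_apply, Equiv.swap_apply_of_ne_of_ne hab hac]

lemma c3_apply_b {a b c : Ω} (hac : a ≠ c) (hbc : b ≠ c) : c3 a b c b = c := by
  simp [c3, Equiv.Perm.mul_apply,
    Equiv.swap_apply_of_ne_of_ne (Ne.symm hac) (Ne.symm hbc)]

lemma c3_apply_c {a b c : Ω} : c3 a b c c = a := by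
  simp [c3, Equiv.Perm.mul_apply]

lemma c3_apply_other {a b c x : Ω} (hxa : x ≠ a) (hxb : x ≠ b) (hxc : x ≠ c) :
    c3 a b c x = x := by
  simp [c3, Equiv.Perm.mul_apply, Equiv.swap_apply_of_ne_of_ne hxb hxc,
    Equiv.swap_apply_of_ne_of_ne hxa hxb]

lemma c3_conj (σ : Equiv.Perm Ω) (a b c : Ω) :
    σ * c3 a b c * σ⁻¹ = c3 (σ a) (σ b) (σ c) := by
  rw [c3, c3, Equiv.swap_apply_apply σ a b, Equiv.swap_apply_apply σ b c]
  group

lemma c3_mem_alternating [Fintype Ω] {a b c : Ω} (hab : a ≠ b) (hbc : b ≠ c) :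
    c3 a b c ∈ alternatingGroup Ω := by
  rw [Equiv.Perm.mem_alternatingGroup, c3, map_mul,
    Equiv.Perm.sign_swap hab, Equiv.Perm.sign_swap hbc]
  decide

lemma c3_mul_c3 {a b c : Ω} (hab : a ≠ b) (hac : a ≠ c) (hbc : b ≠ c) :
    c3 a b c * c3 a c b = 1 := by
  ext x
  rcases eq_or_ne x a with rfl | hxa
  · rw [Equiv.Perm.mul_apply, c3_apply_a hac hab, c3_apply_c, Equiv.Perm.one_apply]
  rcases eq_or_ne x b with rfl | hxb
  · rw [Equiv.Perm.mul_apply, c3_apply_c, c3_apply_a hab hac, Equiv.Perm.one_apply]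
  rcases eq_or_ne x c with rfl | hxc
  · rw [Equiv.Perm.mul_apply, c3_apply_b hab (Ne.symm hbc), c3_apply_b hac hbc,
      Equiv.Perm.one_apply]
  · rw [Equiv.Perm.mul_apply, c3_apply_other hxa hxc hxb, c3_apply_other hxa hxb hxc,
      Equiv.Perm.one_apply]

lemma c3_inv {a b c : Ω} (hab : a ≠ b) (hac : a ≠ c) (hbc : b ≠ c) :
    (c3 a b c)⁻¹ = c3 a c b :=
  inv_eq_of_mul_eq_one_right (c3_mul_c3 hab hac hbc)

lemma c3_rot {a b c : Ω} (hab : a ≠ b) (hac : a ≠ c) (hbc : b ≠ c) :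
    c3 a b c = c3 b c a := by
  ext x
  rcases eq_or_ne x a with rfl | hxa
  · rw [c3_apply_a hab hac, c3_apply_c]
  rcases eq_or_ne x b with rfl | hxb
  · rw [c3_apply_b hac hbc, c3_apply_a hbc (Ne.symm hab)]
  rcases eq_or_ne x c with rfl | hxc
  · rw [c3_apply_c, c3_apply_b (Ne.symm hab) (Ne.symm hac)]
  · rw [c3_apply_other hxa hxb hxc, c3_apply_other hxb hxc hxa]

/-- Every 3-cycle has the form `c3 a b c`. -/
lemma isThreeCycle_exists_c3 [Fintype Ω] {σ : Equiv.Perm Ω} (h : σ.IsThreeCycle) :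
    ∃ a b c : Ω, a ≠ b ∧ a ≠ c ∧ b ≠ c ∧ σ = c3 a b c := by
  have h3 : σ ^ 3 = 1 := by
    rw [← h.orderOf]; exact pow_orderOf_eq_one σ
  have hcard : σ.support.card = 3 := h.card_support
  have hne : σ ≠ 1 := by
    intro e; rw [e] at hcard; simp at hcard
  obtain ⟨a, ha⟩ : ∃ a : Ω, σ a ≠ a := by
    by_contra hcon
    push_neg at hcon
    exact hne (Equiv.ext fun x => by rw [hcon x, Equiv.Perm.one_apply])
  have hmul : σ * (σ * σ) = 1 := by
    rw [← h3, pow_succ, pow_succ, pow_one, mul_assoc]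
  have h3a : ∀ x : Ω, σ (σ (σ x)) = x := by
    intro x
    have := DFunLike.congr_fun hmul x
    simpa [Equiv.Perm.mul_apply] using this
  refine ⟨a, σ a, σ (σ a), Ne.symm ha, ?_, ?_, ?_⟩
  · intro e
    apply ha
    conv_lhs => rw [e]
    rw [h3a a]
  · intro e
    exact ha (σ.injective e.symm)
  · have hsub : ({a, σ a, σ (σ a)} : Finset Ω) ⊆ σ.support := by
      intro x hx
      simp only [Finset.mem_insert, Finset.mem_singleton] at hx
      rcases hx with rfl | rfl | rfl
      · exact Equiv.Perm.mem_support.2 ha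
      · exact Equiv.Perm.mem_support.2 fun e => ha (σ.injective e)
      · exact Equiv.Perm.mem_support.2 fun e => ha (σ.injective (σ.injective e))
    have hab : a ≠ σ a := Ne.symm ha
    have hac : a ≠ σ (σ a) := by
      intro e; apply ha; conv_lhs => rw [e]
      rw [h3a a]
    have hbc : σ a ≠ σ (σ a) := fun e => ha (σ.injective e.symm)
    have hcard3 : ({a, σ a, σ (σ a)} : Finset Ω).card = 3 := by
      rw [Finset.card_insert_of_notMem (by simp [hab, hac]),
        Finset.card_insert_of_notMem (by simp [hbc]), Finset.card_singleton]
    have hsupp : ({a, σ a, σ (σ a)} : Finset Ω) = σ.support :=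
      Finset.eq_of_subset_of_card_le hsub (by omega)
    ext x
    rcases eq_or_ne x a with rfl | hxa
    · rw [c3_apply_a hab hac]
    rcases eq_or_ne x (σ a) with rfl | hxb
    · rw [c3_apply_b hac hbc]
    rcases eq_or_ne x (σ (σ a)) with rfl | hxc
    · rw [c3_apply_c, h3a a]
    · rw [c3_apply_other hxa hxb hxc]
      have : x ∉ σ.support := by
        rw [← hsupp]; simp [hxa, hxb, hxc]
      exact Equiv.Perm.notMem_support.1 this

/-- `P3 G Z`: every 3-cycle supported inside `Z` belongs to `G`. -/
def P3 (G : Subgroup (Equiv.Perm Ω)) (Z : Finset Ω) : Prop :=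
  ∀ a ∈ Z, ∀ b ∈ Z, ∀ c ∈ Z, a ≠ b → a ≠ c → b ≠ c → c3 a b c ∈ G

lemma P3.image {G : Subgroup (Equiv.Perm Ω)} {Z : Finset Ω} (h : P3 G Z)
    {σ : Equiv.Perm Ω} (hσ : σ ∈ G) : P3 G (Z.image σ) := by
  intro a ha b hb c hc hab hac hbc
  obtain ⟨a', ha', rfl⟩ := Finset.mem_image.1 ha
  obtain ⟨b', hb', rfl⟩ := Finset.mem_image.1 hb
  obtain ⟨c', hc', rfl⟩ := Finset.mem_image.1 hc
  rw [← c3_conj]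
  exact mul_mem (mul_mem hσ (h a' ha' b' hb' c' hc'
    (fun e => hab (by rw [e])) (fun e => hac (by rw [e])) (fun e => hbc (by rw [e]))))
    (inv_mem hσ)

lemma exists_ne3 {A : Finset Ω} (hA : 4 ≤ A.card) (u w x : Ω) :
    ∃ z ∈ A, z ≠ u ∧ z ≠ w ∧ z ≠ x := by
  have h3 : ({u, w, x} : Finset Ω).card ≤ 3 := by
    refine le_trans (Finset.card_insert_le _ _) (Nat.succ_le_succ ?_)
    refine le_trans (Finset.card_insert_le _ _) (Nat.succ_le_succ ?_)
    simp
  have hle := Finset.le_card_sdiff ({u, w, x} : Finset Ω) A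
  have hpos : 0 < (A \ {u, w, x}).card := by omega
  obtain ⟨z, hz⟩ := Finset.card_pos.1 hpos
  rw [Finset.mem_sdiff] at hz
  refine ⟨z, hz.1, ?_, ?_, ?_⟩ <;>
    · intro e
      apply hz.2
      simp [e]

section Main

variable [Fintype Ω] {G : Subgroup (Equiv.Perm Ω)}

lemma transfer {A : Finset Ω} (hA : P3 G A) (hA5 : 5 ≤ A.card) {b u w : Ω}
    (hb : b ∉ A) (hu : u ∈ A) (hw : w ∈ A) (huw : u ≠ w) (h0 : c3 b u w ∈ G) :
    ∀ x ∈ A, ∀ y ∈ A, x ≠ y → c3 b x y ∈ G := by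
  have hbu : b ≠ u := fun e => hb (e ▸ hu)
  have hbw : b ≠ w := fun e => hb (e ▸ hw)
  have step1 : ∀ x ∈ A, x ≠ w → c3 b x w ∈ G := by
    intro x hx hxw
    rcases eq_or_ne x u with rfl | hxu
    · exact h0
    obtain ⟨z, hzA, hzu, hzw, hzx⟩ := exists_ne3 (A := A) (by omega) u w x
    have hbx : b ≠ x := fun e => hb (e ▸ hx)
    have hbz : b ≠ z := fun e => hb (e ▸ hzA)
    have hc : c3 u x z ∈ G :=
      hA u hu x hx z hzA (Ne.symm hxu) (Ne.symm hzu) (Ne.symm hzx)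
    have key : c3 b x w = c3 u x z * c3 b u w * (c3 u x z)⁻¹ := by
      rw [c3_conj, c3_apply_other hbu hbx hbz, c3_apply_a (Ne.symm hxu) (Ne.symm hzu),
        c3_apply_other (Ne.symm huw) hxw.symm hzw.symm]
    rw [key]
    exact mul_mem (mul_mem hc h0) (inv_mem hc)
  have step2 : ∀ x ∈ A, x ≠ w → ∀ y ∈ A, y ≠ x → c3 b x y ∈ G := by
    intro x hx hxw y hy hyx
    rcases eq_or_ne y w with rfl | hyw
    · exact step1 x hx hxw
    obtain ⟨z, hzA, hzw, hzy, hzx⟩ := exists_ne3 (A := A) (by omega) w y x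
    have hbx : b ≠ x := fun e => hb (e ▸ hx)
    have hby : b ≠ y := fun e => hb (e ▸ hy)
    have hbz : b ≠ z := fun e => hb (e ▸ hzA)
    have hc : c3 w y z ∈ G :=
      hA w hw y hy z hzA (Ne.symm hyw) (Ne.symm hzw) (Ne.symm hzy)
    have key : c3 b x y = c3 w y z * c3 b x w * (c3 w y z)⁻¹ := by
      rw [c3_conj, c3_apply_other hbw hby hbz, c3_apply_other hxw hyx.symm hzx.symm,
        c3_apply_a (Ne.symm hyw) (Ne.symm hzw)]
    rw [key]
    exact mul_mem (mul_mem hc (step1 x hx hxw)) (inv_mem hc)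
  intro x hx y hy hxy
  rcases eq_or_ne x w with heq | hxw
  · have hyw : y ≠ w := fun e => hxy (heq.trans e.symm)
    have h1 : c3 b y w ∈ G := step1 y hy hyw
    have hby : b ≠ y := fun e => hb (e ▸ hy)
    have hinv : (c3 b y w)⁻¹ = c3 b w y := c3_inv hby hbw hyw
    rw [heq]
    exact hinv ▸ inv_mem h1
  · exact step2 x hx hxw y hy (Ne.symm hxy)

lemma case2 {A B : Finset Ω} (hA : P3 G A) (hB : P3 G B) (hA5 : 5 ≤ A.card)
    {u w b : Ω} (hu : u ∈ A) (huB : u ∈ B) (hw : w ∈ A) (hwB : w ∈ B) (huw : u ≠ w)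
    (hbB : b ∈ B) (hbA : b ∉ A) : P3 G (insert b A) := by
  have hbu : b ≠ u := fun e => hbA (e ▸ hu)
  have hbw : b ≠ w := fun e => hbA (e ▸ hw)
  have h0 : c3 b u w ∈ G := hB b hbB u huB w hwB hbu hbw huw
  have key := transfer hA hA5 hbA hu hw huw h0
  intro x hx y hy z hz hxy hxz hyz
  rcases Finset.mem_insert.1 hx with rfl | hxA
  · have hyA : y ∈ A := (Finset.mem_insert.1 hy).resolve_left fun e => hxy e.symm
    have hzA : z ∈ A := (Finset.mem_insert.1 hz).resolve_left fun e => hxz e.symm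
    exact key y hyA z hzA hyz
  rcases Finset.mem_insert.1 hy with rfl | hyA
  · have hzA : z ∈ A := (Finset.mem_insert.1 hz).resolve_left fun e => hyz e.symm
    rw [c3_rot hxy hxz hyz]
    exact key z hzA x hxA (Ne.symm hxz)
  rcases Finset.mem_insert.1 hz with rfl | hzA
  · rw [c3_rot hxy hxz hyz, c3_rot hyz (Ne.symm hxy) (Ne.symm hxz)]
    exact key x hxA y hyA hxy
  · exact hA x hxA y hyA z hzA hxy hxz hyz

lemma combine {A B : Finset Ω} (hA : P3 G A) (hB : P3 G B) (hA5 : 5 ≤ A.card)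
    (hB5 : 5 ≤ B.card) {p b0 : Ω} (hpA : p ∈ A) (hpB : p ∈ B)
    (hb0B : b0 ∈ B) (hb0A : b0 ∉ A) : ∃ b ∉ A, P3 G (insert b A) := by
  by_cases hex : ∃ u ∈ A ∩ B, ∃ w ∈ A ∩ B, u ≠ w
  · obtain ⟨u, hu, w, hw, huw⟩ := hex
    rw [Finset.mem_inter] at hu hw
    exact ⟨b0, hb0A, case2 hA hB hA5 hu.1 hu.2 hw.1 hw.2 huw hb0B hb0A⟩
  · push_neg at hex
    have hsub : ∀ q, q ∈ A → q ∈ B → q = p := by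
      intro q hqA hqB
      exact hex q (Finset.mem_inter.2 ⟨hqA, hqB⟩) p (Finset.mem_inter.2 ⟨hpA, hpB⟩)
    -- pick two distinct points of B \ A
    have hBsub : B.erase p ⊆ B \ A := by
      intro x hx
      rw [Finset.mem_erase] at hx
      exact Finset.mem_sdiff.2 ⟨hx.2, fun hxA => hx.1 (hsub x hxA hx.2)⟩
    have hcard : 1 < (B \ A).card := by
      have h1 : (B.erase p).card = B.card - 1 := Finset.card_erase_of_mem hpB
      have h2 := Finset.card_le_card hBsub
      omega
    obtain ⟨u, hu, w, hw, huw⟩ := Finset.one_lt_card.1 hcard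
    rw [Finset.mem_sdiff] at hu hw
    have hup : u ≠ p := fun e => hu.2 (e ▸ hpA)
    have hwp : w ≠ p := fun e => hw.2 (e ▸ hpA)
    have hτ : c3 u p w ∈ G := hB u hu.1 p hpB w hw.1 hup huw (Ne.symm hwp)
    set τ := c3 u p w with hτdef
    have hτp : τ p = w := c3_apply_b huw (Ne.symm hwp)
    have hfix : ∀ x ∈ A, x ≠ p → τ x = x := by
      intro x hxA hxp
      exact c3_apply_other (fun e => hu.2 (e ▸ hxA)) hxp (fun e => hw.2 (e ▸ hxA))
    have hA' : P3 G (A.image τ) := hA.image hτ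
    have hwA' : w ∈ A.image τ := Finset.mem_image.2 ⟨p, hpA, hτp⟩
    have hcardAe : 1 < (A.erase p).card := by
      have := Finset.card_erase_of_mem hpA
      omega
    obtain ⟨u₂, hu₂, w₂, hw₂, huw₂⟩ := Finset.one_lt_card.1 hcardAe
    rw [Finset.mem_erase] at hu₂ hw₂
    have hu₂A' : u₂ ∈ A.image τ := Finset.mem_image.2 ⟨u₂, hu₂.2, hfix u₂ hu₂.2 hu₂.1⟩
    have hw₂A' : w₂ ∈ A.image τ := Finset.mem_image.2 ⟨w₂, hw₂.2, hfix w₂ hw₂.2 hw₂.1⟩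
    exact ⟨w, hw.2, case2 hA hA' hA5 hu₂.2 hu₂A' hw₂.2 hw₂A' huw₂ hwA' hw.2⟩

lemma mainInd {m : ℕ} (g : Fin m → Equiv.Perm Ω)
    (hG : G = Subgroup.closure (Set.range g))
    (htrans : ∀ a b : Ω, ∃ σ ∈ G, σ a = b)
    (Y : Finset Ω) (hgen : ∀ i : Fin m, ∃ y ∈ Y, g i y ∈ Y) :
    ∀ (n : ℕ) (Z : Finset Ω), Y ⊆ Z → 5 ≤ Z.card → Fintype.card Ω ≤ Z.card + n →
      P3 G Z → ∀ a b c : Ω, a ≠ b → a ≠ c → b ≠ c → c3 a b c ∈ G := by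
  intro n
  induction n with
  | zero =>
    intro Z _ _ hcard hP a b c hab hac hbc
    have hZu : Z = Finset.univ := by
      apply Finset.eq_of_subset_of_card_le (Finset.subset_univ Z)
      rw [Finset.card_univ]; omega
    exact hP a (by simp [hZu]) b (by simp [hZu]) c (by simp [hZu]) hab hac hbc
  | succ n ih =>
    intro Z hYZ hZ5 hcard hP a b c hab hac hbc
    by_cases hinv : ∀ i : Fin m, ∀ x ∈ Z, g i x ∈ Z
    · have hK : ∀ σ ∈ G, ∀ x ∈ Z, σ x ∈ Z := by
        let K : Subgroup (Equiv.Perm Ω) :=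
          { carrier := {σ | ∀ x ∈ Z, σ x ∈ Z}
            one_mem' := fun {x} hx => by simpa using hx
            mul_mem' := fun {σ τ} hσ hτ x hx => hσ _ (hτ _ hx)
            inv_mem' := by
              intro σ hσ x hx
              have himg : Z.image σ = Z := by
                apply Finset.eq_of_subset_of_card_le
                · intro b hb
                  obtain ⟨a', ha', rfl⟩ := Finset.mem_image.1 hb
                  exact hσ _ ha'
                · rw [Finset.card_image_of_injective _ σ.injective]
              have hximg : x ∈ Z.image σ := himg.symm ▸ hx
              obtain ⟨b', hb', hbx⟩ := Finset.mem_image.1 hximg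
              rw [← hbx]
              simpa using hb' }
        have hle : G ≤ K := by
          rw [hG]
          apply (Subgroup.closure_le K).2
          rintro _ ⟨i, rfl⟩
          exact hinv i
        exact fun σ hσ => hle hσ
      have hZne : Z.Nonempty := Finset.card_pos.1 (by omega)
      obtain ⟨z₀, hz₀⟩ := hZne
      have hZu : ∀ x : Ω, x ∈ Z := by
        intro x
        obtain ⟨σ, hσ, hσx⟩ := htrans z₀ x
        exact hσx ▸ hK σ hσ z₀ hz₀
      exact hP a (hZu a) b (hZu b) c (hZu c) hab hac hbc
    · push_neg at hinv
      obtain ⟨i, x0, hx0Z, hx0⟩ := hinv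
      have hgi : g i ∈ G := hG ▸ Subgroup.subset_closure ⟨i, rfl⟩
      obtain ⟨y, hyY, hgyY⟩ := hgen i
      have hB : P3 G (Z.image (g i)) := hP.image hgi
      have hB5 : 5 ≤ (Z.image (g i)).card := by
        rw [Finset.card_image_of_injective _ (g i).injective]; exact hZ5
      obtain ⟨b', hb'Z, hPins⟩ := combine hP hB hZ5 hB5 (p := g i y)
        (hYZ hgyY) (Finset.mem_image_of_mem _ (hYZ hyY))
        (Finset.mem_image_of_mem _ hx0Z) hx0
      have hcardins : (insert b' Z).card = Z.card + 1 :=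
        Finset.card_insert_of_notMem hb'Z
      exact ih (insert b' Z) (hYZ.trans (Finset.subset_insert _ _))
        (by omega) (by omega) hPins a b c hab hac hbc

end Main

end Stmt0Aux

theorem stmt0 {Ω : Type*} [Fintype Ω] [DecidableEq Ω]
    (m : ℕ) (g : Fin m → Equiv.Perm Ω) (G : Subgroup (Equiv.Perm Ω))
    (hG : G = Subgroup.closure (Set.range g))
    (htrans : ∀ a b : Ω, ∃ σ ∈ G, σ a = b)
    (Y : Finset Ω) (hY : 5 ≤ Y.card)
    (U : Subgroup (Equiv.Perm Ω)) (hUG : U ≤ G)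
    (hU : ∀ σ : Equiv.Perm Ω,
      σ ∈ U ↔ ((∀ x : Ω, x ∉ Y → σ x = x) ∧ σ ∈ alternatingGroup Ω))
    (hgen : ∀ i : Fin m, ∃ y ∈ Y, g i y ∈ Y) :
    alternatingGroup Ω ≤ G := by
  classical
  have hPY : Stmt0Aux.P3 G Y := by
    intro a ha b hb c hc hab hac hbc
    apply hUG
    rw [hU]
    refine ⟨fun x hx => ?_, Stmt0Aux.c3_mem_alternating hab hbc⟩
    exact Stmt0Aux.c3_apply_other (fun e => hx (e ▸ ha)) (fun e => hx (e ▸ hb))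
      (fun e => hx (e ▸ hc))
  rw [← Equiv.Perm.closure_three_cycles_eq_alternating]
  apply (Subgroup.closure_le G).2
  rintro σ hσ
  obtain ⟨a, b, c, hab, hac, hbc, rfl⟩ := Stmt0Aux.isThreeCycle_exists_c3 hσ
  exact Stmt0Aux.mainInd g hG htrans Y hgen (Fintype.card Ω) Y (subset_refl Y) hY
    (by omega) hPY a b c hab hac hbc
end

section
/- Let Ω be a finite set, Y ⊆ Ω with |Y| ≥ 5, and let U ≤ Sym(Ω) be a subgroup that fixes every point of Ω∖Y and induces the full alternating group on Y. Let g ∈ Sym(Ω) and set Y' := Y ∪ g(Y). If |Y'| < 2|Y|, then the subgroup V := ⟨U, gUg⁻¹⟩ fixes every point of Ω∖Y' and acts primitively on Y'. -/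
section Helpers

variable {Ω : Type*} [Fintype Ω] [DecidableEq Ω]

/-- subgroup of permutations fixing everything outside S -/
def fixOutside (S : Finset Ω) : Subgroup (Equiv.Perm Ω) where
  carrier := {σ | ∀ x ∉ S, σ x = x}
  one_mem' := by intro x _; rfl
  mul_mem' := by
    intro a b ha hb x hx
    simp only [Set.mem_setOf_eq] at *
    rw [Equiv.Perm.mul_apply, hb x hx, ha x hx]
  inv_mem' := by
    intro a ha x hx
    simp only [Set.mem_setOf_eq] at *
    have := ha x hx
    conv_lhs => rw [← this]
    simp

lemma cyc_mem (Y : Finset Ω) (U : Subgroup (Equiv.Perm Ω))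
    (hU : ∀ σ : Equiv.Perm Ω,
      σ ∈ U ↔ ((∀ x : Ω, x ∉ Y → σ x = x) ∧ σ ∈ alternatingGroup Ω))
    {a b c : Ω} (ha : a ∈ Y) (hb : b ∈ Y) (hc : c ∈ Y)
    (hab : a ≠ b) (hac : a ≠ c) :
    Equiv.swap a c * Equiv.swap a b ∈ U := by
  rw [hU]
  refine ⟨?_, ?_⟩
  · intro x hx
    have hxa : x ≠ a := fun h => hx (h ▸ ha)
    have hxb : x ≠ b := fun h => hx (h ▸ hb)
    have hxc : x ≠ c := fun h => hx (h ▸ hc)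
    rw [Equiv.Perm.mul_apply, Equiv.swap_apply_of_ne_of_ne hxa hxb,
      Equiv.swap_apply_of_ne_of_ne hxa hxc]
  · rw [Equiv.Perm.mem_alternatingGroup, map_mul,
      Equiv.Perm.sign_swap hac, Equiv.Perm.sign_swap hab]
    norm_num

lemma exists_third (Y : Finset Ω) (hY : 5 ≤ Y.card) (a b : Ω) :
    ∃ c ∈ Y, c ≠ a ∧ c ≠ b := by
  have h2 : ({a, b} : Finset Ω).card ≤ 2 := by
    apply le_trans (Finset.card_insert_le _ _); simp
  have : 0 < (Y \ {a, b}).card := by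
    have := Finset.le_card_sdiff ({a, b} : Finset Ω) Y
    omega
  obtain ⟨c, hc⟩ := Finset.card_pos.mp this
  rw [Finset.mem_sdiff, Finset.mem_insert, Finset.mem_singleton] at hc
  exact ⟨c, hc.1, fun h => hc.2 (Or.inl h), fun h => hc.2 (Or.inr h)⟩

lemma exists_fourth (Y : Finset Ω) (hY : 5 ≤ Y.card) (a b c : Ω) :
    ∃ d ∈ Y, d ≠ a ∧ d ≠ b ∧ d ≠ c := by
  have h2 : ({a, b, c} : Finset Ω).card ≤ 3 := by
    apply le_trans (Finset.card_insert_le _ _)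
    have : ({b, c} : Finset Ω).card ≤ 2 := by
      apply le_trans (Finset.card_insert_le _ _); simp
    omega
  have : 0 < (Y \ {a, b, c}).card := by
    have := Finset.le_card_sdiff ({a, b, c} : Finset Ω) Y
    omega
  obtain ⟨d, hd⟩ := Finset.card_pos.mp this
  rw [Finset.mem_sdiff, Finset.mem_insert, Finset.mem_insert, Finset.mem_singleton] at hd
  push_neg at hd
  exact ⟨d, hd.1, hd.2⟩

lemma transY (Y : Finset Ω) (hY : 5 ≤ Y.card) (U : Subgroup (Equiv.Perm Ω))
    (hU : ∀ σ : Equiv.Perm Ω,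
      σ ∈ U ↔ ((∀ x : Ω, x ∉ Y → σ x = x) ∧ σ ∈ alternatingGroup Ω)) :
    ∀ a ∈ Y, ∀ b ∈ Y, ∃ u ∈ U, u a = b := by
  intro a ha b hb
  by_cases hab : a = b
  · exact ⟨1, one_mem U, hab⟩
  · obtain ⟨c, hc, hca, hcb⟩ := exists_third Y hY a b
    refine ⟨Equiv.swap a c * Equiv.swap a b, cyc_mem Y U hU ha hb hc hab (Ne.symm hca), ?_⟩
    rw [Equiv.Perm.mul_apply, Equiv.swap_apply_left,
      Equiv.swap_apply_of_ne_of_ne (Ne.symm hab) (fun h => hcb h.symm)]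

lemma trans2Y (Y : Finset Ω) (hY : 5 ≤ Y.card) (U : Subgroup (Equiv.Perm Ω))
    (hU : ∀ σ : Equiv.Perm Ω,
      σ ∈ U ↔ ((∀ x : Ω, x ∉ Y → σ x = x) ∧ σ ∈ alternatingGroup Ω))
    {a b c : Ω} (ha : a ∈ Y) (hb : b ∈ Y) (hc : c ∈ Y)
    (hba : b ≠ a) (hca : c ≠ a) (hbc : b ≠ c) :
    ∃ u ∈ U, u a = a ∧ u b = c := by
  obtain ⟨d, hd, hda, hdb, hdc⟩ := exists_fourth Y hY a b c
  refine ⟨Equiv.swap b d * Equiv.swap b c, cyc_mem Y U hU hb hc hd hbc (Ne.symm hdb), ?_, ?_⟩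
  · rw [Equiv.Perm.mul_apply, Equiv.swap_apply_of_ne_of_ne (Ne.symm hba) (Ne.symm hca),
      Equiv.swap_apply_of_ne_of_ne (Ne.symm hba) (Ne.symm hda)]
  · rw [Equiv.Perm.mul_apply, Equiv.swap_apply_left,
      Equiv.swap_apply_of_ne_of_ne (Ne.symm hbc) (fun h => hdc h.symm)]

end Helpers
/-- if `U` consists exactly of the even permutations supported on `Y`
(`|Y| ≥ 5`), `g ∈ Sym Ω`, `Y' = Y ∪ g(Y)` and `|Y'| < 2|Y|`, then `V = ⟨U, gUg⁻¹⟩`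
fixes every point outside `Y'` and acts primitively on `Y'`. -/
theorem stmt1 {Ω : Type*} [Fintype Ω] [DecidableEq Ω]
    (Y : Finset Ω) (hY : 5 ≤ Y.card)
    (U : Subgroup (Equiv.Perm Ω))
    (hU : ∀ σ : Equiv.Perm Ω,
      σ ∈ U ↔ ((∀ x : Ω, x ∉ Y → σ x = x) ∧ σ ∈ alternatingGroup Ω))
    (g : Equiv.Perm Ω)
    (Y' : Finset Ω) (hY' : Y' = Y ∪ Y.image g)
    (hsize : Y'.card < 2 * Y.card)
    (V : Subgroup (Equiv.Perm Ω))
    (hV : V = U ⊔ Subgroup.map (MulAut.conj g).toMonoidHom U) :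
    (∀ v ∈ V, ∀ x : Ω, x ∉ Y' → v x = x) ∧
    (∀ a ∈ Y', ∀ b ∈ Y', ∃ v ∈ V, v a = b) ∧
    (∀ B : Set Ω, B ⊆ (Y' : Set Ω) →
      (∀ v ∈ V, (v : Equiv.Perm Ω) '' B = B ∨ Disjoint ((v : Equiv.Perm Ω) '' B) B) →
      B.Subsingleton ∨ B = (Y' : Set Ω)) := by
  set G : Finset Ω := Y.image g with hG
  -- basic facts
  have hcardG : G.card = Y.card := Finset.card_image_of_injective _ g.injective
  have hYsub : Y ⊆ Y' := by rw [hY']; exact Finset.subset_union_left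
  have hGsub : G ⊆ Y' := by rw [hY']; exact Finset.subset_union_right
  have hUV : U ≤ V := by rw [hV]; exact le_sup_left
  have hMV : Subgroup.map (MulAut.conj g).toMonoidHom U ≤ V := by rw [hV]; exact le_sup_right
  -- intersection point
  have hinter : ∃ x0, x0 ∈ Y ∧ x0 ∈ G := by
    have hcard := Finset.card_union_add_card_inter Y G
    have : 0 < (Y ∩ G).card := by rw [hY'] at hsize; omega
    obtain ⟨x0, hx0⟩ := Finset.card_pos.mp this
    rw [Finset.mem_inter] at hx0
    exact ⟨x0, hx0⟩
  obtain ⟨x0, hx0Y, hx0G⟩ := hinter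
  -- elements of U fix outside Y
  have fixU : ∀ u ∈ U, ∀ x, x ∉ Y → u x = x := fun u hu => (hU u).mp hu |>.1
  -- members of the conjugate subgroup
  have memM : ∀ u ∈ U, g * u * g⁻¹ ∈ Subgroup.map (MulAut.conj g).toMonoidHom U := by
    intro u hu
    exact ⟨u, hu, by simp [MulAut.conj_apply]⟩
  have fixM : ∀ v ∈ Subgroup.map (MulAut.conj g).toMonoidHom U, ∀ x, x ∉ G → v x = x := by
    intro v hv x hx
    obtain ⟨u, hu, rfl⟩ := hv
    have hgx : g⁻¹ x ∉ Y := by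
      intro h
      exact hx (by rw [hG]; exact Finset.mem_image.mpr ⟨g⁻¹ x, h, by simp⟩)
    have := fixU u hu _ hgx
    simp only [MulEquiv.coe_toMonoidHom, MulAut.conj_apply, Equiv.Perm.mul_apply, this]
    simp
  -- transitivity of conjugate subgroup on G
  have transG : ∀ a ∈ G, ∀ b ∈ G, ∃ v ∈ Subgroup.map (MulAut.conj g).toMonoidHom U, v a = b := by
    intro a ha b hb
    obtain ⟨a', ha', rfl⟩ := Finset.mem_image.mp ha
    obtain ⟨b', hb', rfl⟩ := Finset.mem_image.mp hb
    obtain ⟨u, hu, hab⟩ := transY Y hY U hU a' ha' b' hb'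
    exact ⟨g * u * g⁻¹, memM u hu, by simp [Equiv.Perm.mul_apply, hab]⟩
  have trans2G : ∀ a ∈ G, ∀ b ∈ G, ∀ c ∈ G, b ≠ a → c ≠ a → b ≠ c →
      ∃ v ∈ Subgroup.map (MulAut.conj g).toMonoidHom U, v a = a ∧ v b = c := by
    intro a ha b hb c hc hba hca hbc
    obtain ⟨a', ha', rfl⟩ := Finset.mem_image.mp ha
    obtain ⟨b', hb', rfl⟩ := Finset.mem_image.mp hb
    obtain ⟨c', hc', rfl⟩ := Finset.mem_image.mp hc
    obtain ⟨u, hu, hua, hub⟩ := trans2Y Y hY U hU ha' hb' hc'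
      (fun h => hba (by rw [h])) (fun h => hca (by rw [h])) (fun h => hbc (by rw [h]))
    exact ⟨g * u * g⁻¹, memM u hu,
      by simp [Equiv.Perm.mul_apply, hua], by simp [Equiv.Perm.mul_apply, hub]⟩
  refine ⟨?_, ?_, ?_⟩
  -- Part 1: fixes outside Y'
  · intro v hv
    rw [hV] at hv
    have hle : U ⊔ Subgroup.map (MulAut.conj g).toMonoidHom U ≤ fixOutside Y' := by
      apply sup_le
      · intro u hu x hx
        exact fixU u hu x (fun h => hx (hYsub h))
      · intro w hw x hx
        exact fixM w hw x (fun h => hx (hGsub h))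
    exact hle hv
  -- Part 2: transitivity
  · intro a ha b hb
    rw [hY', Finset.mem_union] at ha hb
    rcases ha with haY | haG <;> rcases hb with hbY | hbG
    · obtain ⟨u, hu, h⟩ := transY Y hY U hU a haY b hbY
      exact ⟨u, hUV hu, h⟩
    · obtain ⟨u, hu, h1⟩ := transY Y hY U hU a haY x0 hx0Y
      obtain ⟨w, hw, h2⟩ := transG x0 hx0G b hbG
      exact ⟨w * u, mul_mem (hMV hw) (hUV hu), by rw [Equiv.Perm.mul_apply, h1, h2]⟩
    · obtain ⟨w, hw, h1⟩ := transG a haG x0 hx0G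
      obtain ⟨u, hu, h2⟩ := transY Y hY U hU x0 hx0Y b hbY
      exact ⟨u * w, mul_mem (hUV hu) (hMV hw), by rw [Equiv.Perm.mul_apply, h1, h2]⟩
    · obtain ⟨w, hw, h⟩ := transG a haG b hbG
      exact ⟨w, hMV hw, h⟩
  -- Part 3: primitivity
  · intro B hBsub hB
    by_cases hss : B.Subsingleton
    · exact Or.inl hss
    right
    rw [Set.not_subsingleton_iff] at hss
    obtain ⟨a, haB, b, hbB, hab⟩ := hss
    -- key: if some point of B is fixed into B by v, then v maps B into B
    have key : ∀ v ∈ V, ∀ p ∈ B, (v : Equiv.Perm Ω) p ∈ B →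
        ∀ q ∈ B, (v : Equiv.Perm Ω) q ∈ B := by
      intro v hv p hp hvp q hq
      rcases hB v hv with h | h
      · rw [← h]; exact Set.mem_image_of_mem _ hq
      · exact absurd hvp (Set.disjoint_left.mp h (Set.mem_image_of_mem _ hp))
    -- two distinct points of B in Y force Y ⊆ B
    have fullY : ∀ p ∈ B, p ∈ Y → ∀ q ∈ B, q ∈ Y → p ≠ q → ∀ c ∈ Y, c ∈ B := by
      intro p hpB hpY q hqB hqY hpq c hc
      by_cases hcp : c = p; · exact hcp ▸ hpB
      by_cases hcq : c = q; · exact hcq ▸ hqB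
      obtain ⟨u, hu, hup, huq⟩ := trans2Y Y hY U hU hpY hqY hc
        (Ne.symm hpq) hcp (fun h => hcq h.symm)
      have := key u (hUV hu) p hpB (by rw [hup]; exact hpB) q hqB
      rwa [huq] at this
    -- two distinct points of B in G force G ⊆ B
    have fullG : ∀ p ∈ B, p ∈ G → ∀ q ∈ B, q ∈ G → p ≠ q → ∀ c ∈ G, c ∈ B := by
      intro p hpB hpG q hqB hqG hpq c hc
      by_cases hcp : c = p; · exact hcp ▸ hpB
      by_cases hcq : c = q; · exact hcq ▸ hqB
      obtain ⟨w, hw, hwp, hwq⟩ := trans2G p hpG q hqG c hc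
        (Ne.symm hpq) hcp (fun h => hcq h.symm)
      have := key w (hMV hw) p hpB (by rw [hwp]; exact hpB) q hqB
      rwa [hwq] at this
    -- extension: Y ⊆ B implies G ⊆ B
    have extYG : (∀ c ∈ Y, c ∈ B) → ∀ c ∈ G, c ∈ B := by
      intro hYB c hc
      by_cases hYG : Y ⊆ G
      · have : Y = G := Finset.eq_of_subset_of_card_le hYG (le_of_eq hcardG)
        exact hYB c (this ▸ hc)
      · obtain ⟨y, hyY, hyG⟩ := Finset.not_subset.mp hYG
        obtain ⟨w, hw, hwx⟩ := transG x0 hx0G c hc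
        have hwy : (w : Equiv.Perm Ω) y = y := fixM w hw y hyG
        have := key w (hMV hw) y (hYB y hyY) (by rw [hwy]; exact hYB y hyY)
          x0 (hYB x0 hx0Y)
        rwa [hwx] at this
    -- extension: G ⊆ B implies Y ⊆ B
    have extGY : (∀ c ∈ G, c ∈ B) → ∀ c ∈ Y, c ∈ B := by
      intro hGB c hc
      by_cases hGY : G ⊆ Y
      · have : G = Y := Finset.eq_of_subset_of_card_le hGY (le_of_eq hcardG.symm)
        exact hGB c (this ▸ hc)
      · obtain ⟨z, hzG, hzY⟩ := Finset.not_subset.mp hGY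
        obtain ⟨u, hu, hux⟩ := transY Y hY U hU x0 hx0Y c hc
        have huz : (u : Equiv.Perm Ω) z = z := fixU u hu z hzY
        have := key u (hUV hu) z (hGB z hzG) (by rw [huz]; exact hGB z hzG)
          x0 (hGB x0 hx0G)
        rwa [hux] at this
    -- main claim: Y ⊆ B and G ⊆ B
    have main : (∀ c ∈ Y, c ∈ B) ∧ (∀ c ∈ G, c ∈ B) := by
      have haY' : a ∈ Y' := hBsub haB
      have hbY' : b ∈ Y' := hBsub hbB
      rw [hY', Finset.mem_union] at haY' hbY'
      by_cases haY : a ∈ Y <;> by_cases hbY : b ∈ Y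
      · have hYB := fullY a haB haY b hbB hbY hab
        exact ⟨hYB, extYG hYB⟩
      · -- a ∈ Y, b ∉ Y so b ∈ G; move a to x0 fixing b
        have hbG : b ∈ G := hbY'.resolve_left hbY
        obtain ⟨u, hu, hua⟩ := transY Y hY U hU a haY x0 hx0Y
        have hub : (u : Equiv.Perm Ω) b = b := fixU u hu b hbY
        have hx0B : x0 ∈ B := by
          have := key u (hUV hu) b hbB (by rw [hub]; exact hbB) a haB
          rwa [hua] at this
        have hbx0 : b ≠ x0 := fun h => hbY (h ▸ hx0Y)
        have hGB := fullG b hbB hbG x0 hx0B hx0G hbx0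
        exact ⟨extGY hGB, hGB⟩
      · have haG : a ∈ G := haY'.resolve_left haY
        obtain ⟨u, hu, hub⟩ := transY Y hY U hU b hbY x0 hx0Y
        have hua : (u : Equiv.Perm Ω) a = a := fixU u hu a haY
        have hx0B : x0 ∈ B := by
          have := key u (hUV hu) a haB (by rw [hua]; exact haB) b hbB
          rwa [hub] at this
        have hax0 : a ≠ x0 := fun h => haY (h ▸ hx0Y)
        have hGB := fullG a haB haG x0 hx0B hx0G hax0
        exact ⟨extGY hGB, hGB⟩
      · have haG : a ∈ G := haY'.resolve_left haY
        have hbG : b ∈ G := hbY'.resolve_left hbY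
        have hGB := fullG a haB haG b hbB hbG hab
        exact ⟨extGY hGB, hGB⟩
    refine Set.Subset.antisymm hBsub ?_
    intro x hx
    have : x ∈ Y' := hx
    rw [hY', Finset.mem_union] at this
    rcases this with h | h
    · exact main.1 x h
    · exact main.2 x h
end

section
/- Let Ω be a finite set and Y, Y' ⊆ Ω with Y ∪ Y' = Ω, |Y| ≥ 3, |Y'| ≥ 3, and |Y ∩ Y'| ≥ 2. Let A_Y ≤ Sym(Ω) be the group of even permutations supported on Y (fixing Ω∖Y pointwise), and similarly A_{Y'}. Then ⟨A_Y, A_{Y'}⟩ = Alt(Ω). -/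
open Equiv Equiv.Perm Subgroup

open Equiv Equiv.Perm Subgroup

/-- Any three-cycle decomposes as a product of two transpositions with a common point. -/
lemma threeCycle_decomp {α : Type*} [Fintype α] [DecidableEq α] {σ : Perm α}
    (h : σ.IsThreeCycle) :
    ∃ a b c : α, b ≠ a ∧ c ≠ a ∧ σ = Equiv.swap a b * Equiv.swap a c := by
  have hcard := h.card_support
  obtain ⟨a, ha⟩ : σ.support.Nonempty := Finset.card_pos.mp (by omega)
  have h3 : σ ^ 3 = 1 := by rw [← h.orderOf]; exact pow_orderOf_eq_one σ
  have hcyc : ∀ x, σ (σ (σ x)) = x := by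
    intro x
    have : (σ ^ 3) x = x := by rw [h3]; rfl
    simpa [pow_succ, Equiv.Perm.mul_apply] using this
  have hab : a ≠ σ a := fun e => (Equiv.Perm.mem_support.mp ha) e.symm
  have hbs : σ a ∈ σ.support := Equiv.Perm.apply_mem_support.mpr ha
  have hbc : σ a ≠ σ (σ a) := fun e => (Equiv.Perm.mem_support.mp hbs) e.symm
  have hca : σ (σ (σ a)) = a := hcyc a
  have hac : a ≠ σ (σ a) := by
    intro e
    refine hab (Eq.symm ?_)
    calc σ a = σ (σ (σ a)) := by rw [← e]
    _ = a := hca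
  set b := σ a with hb
  set c := σ b with hc
  have hcardabc : ({a, b, c} : Finset α).card = 3 := by
    rw [Finset.card_insert_of_notMem (by simp [hab, hac]),
      Finset.card_insert_of_notMem (by simp [hbc]), Finset.card_singleton]
  have hsupp : σ.support = {a, b, c} := by
    refine (Finset.eq_of_subset_of_card_le ?_ ?_).symm
    · intro x hx
      simp only [Finset.mem_insert, Finset.mem_singleton] at hx
      rcases hx with rfl | rfl | rfl
      · exact ha
      · exact hbs
      · exact Equiv.Perm.apply_mem_support.mpr hbs
    · rw [hcard, hcardabc]
  refine ⟨b, a, c, hab, (Ne.symm hbc), ?_⟩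
  ext x
  rw [Equiv.Perm.mul_apply]
  by_cases hx : x ∈ σ.support
  · rw [hsupp] at hx
    simp only [Finset.mem_insert, Finset.mem_singleton] at hx
    rcases hx with rfl | rfl | rfl
    · rw [swap_apply_of_ne_of_ne hab hac, swap_apply_right]
    · rw [swap_apply_left, swap_apply_of_ne_of_ne (Ne.symm hbc) (Ne.symm hac), ← hc]
    · rw [swap_apply_right, swap_apply_left, hca]
  · have h1 : σ x = x := Equiv.Perm.notMem_support.mp hx
    rw [hsupp] at hx
    simp only [Finset.mem_insert, Finset.mem_singleton, not_or] at hx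
    rw [h1, swap_apply_of_ne_of_ne (fun e => hx.2.1 e) (fun e => hx.2.2 e),
      swap_apply_of_ne_of_ne (fun e => hx.2.1 e) (fun e => hx.1 e)]

/-- if `Y ∪ Y' = Ω`, `|Y| ≥ 3`, `|Y'| ≥ 3`, `|Y ∩ Y'| ≥ 2`, then
the even permutations supported on `Y` together with those supported on `Y'`
generate the alternating group of `Ω`. -/
theorem stmt15 {Ω : Type*} [Fintype Ω] [DecidableEq Ω]
    (Y Y' : Finset Ω)
    (hcover : Y ∪ Y' = Finset.univ)
    (hY : 3 ≤ Y.card) (hY' : 3 ≤ Y'.card) (hint : 2 ≤ (Y ∩ Y').card) :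
    Subgroup.closure
      ({σ : Equiv.Perm Ω | σ ∈ alternatingGroup Ω ∧ ∀ x ∉ Y, σ x = x} ∪
       {σ : Equiv.Perm Ω | σ ∈ alternatingGroup Ω ∧ ∀ x ∉ Y', σ x = x})
      = alternatingGroup Ω := by
  set S : Set (Equiv.Perm Ω) :=
      {σ : Equiv.Perm Ω | σ ∈ alternatingGroup Ω ∧ ∀ x ∉ Y, σ x = x} ∪
       {σ : Equiv.Perm Ω | σ ∈ alternatingGroup Ω ∧ ∀ x ∉ Y', σ x = x} with hS
  apply le_antisymm
  · rw [Subgroup.closure_le]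
    rintro σ (⟨h1, -⟩ | ⟨h1, -⟩) <;> exact h1
  -- obtain two distinct points of the intersection
  obtain ⟨p, hp, q, hq, hpq⟩ := Finset.one_lt_card.mp (lt_of_lt_of_le one_lt_two hint)
  have hpY : p ∈ Y := (Finset.mem_inter.mp hp).1
  have hpY' : p ∈ Y' := (Finset.mem_inter.mp hp).2
  have hqY : q ∈ Y := (Finset.mem_inter.mp hq).1
  have hqY' : q ∈ Y' := (Finset.mem_inter.mp hq).2
  have hyy : ∀ y : Ω, y ∈ Y ∨ y ∈ Y' := fun y =>
    Finset.mem_union.mp (hcover ▸ Finset.mem_univ y)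
  -- basic three-cycles through p and q lie in the closure
  have hTy : ∀ y : Ω, y ≠ p → y ≠ q → Equiv.swap p q * Equiv.swap p y ∈ Subgroup.closure S := by
    intro y hyp hyq
    apply Subgroup.subset_closure
    have h3 := isThreeCycle_swap_mul_swap_same hpq (Ne.symm hyp) (Ne.symm hyq)
    have hmem : Equiv.swap p q * Equiv.swap p y ∈ alternatingGroup Ω :=
      Equiv.Perm.mem_alternatingGroup.mpr h3.sign
    have hfix : ∀ x : Ω, x ≠ p → x ≠ q → x ≠ y →
        (Equiv.swap p q * Equiv.swap p y) x = x := by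
      intro x hxp hxq hxy
      rw [Equiv.Perm.mul_apply, swap_apply_of_ne_of_ne hxp hxy, swap_apply_of_ne_of_ne hxp hxq]
    rcases hyy y with hyY | hyY'
    · exact Or.inl ⟨hmem, fun x hx => hfix x (fun e => hx (e ▸ hpY))
        (fun e => hx (e ▸ hqY)) (fun e => hx (e ▸ hyY))⟩
    · exact Or.inr ⟨hmem, fun x hx => hfix x (fun e => hx (e ▸ hpY'))
        (fun e => hx (e ▸ hqY')) (fun e => hx (e ▸ hyY'))⟩
  -- products of two transpositions through p lie in the closure
  have hU : ∀ x y : Ω, x ≠ p → y ≠ p → Equiv.swap p x * Equiv.swap p y ∈ Subgroup.closure S := by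
    intro x y hxp hyp
    have hxinv : ∀ z : Ω, z ≠ p → z ≠ q →
        Equiv.swap p z * Equiv.swap p q ∈ Subgroup.closure S := by
      intro z hzp hzq
      have h := inv_mem (hTy z hzp hzq)
      rwa [mul_inv_rev, Equiv.swap_inv, Equiv.swap_inv] at h
    by_cases hxy : x = y
    · subst hxy; rw [Equiv.swap_mul_self]; exact one_mem _
    by_cases hxq : x = q
    · subst hxq
      exact hTy y hyp (fun e => hxy e.symm)
    by_cases hyq : y = q
    · subst hyq
      exact hxinv x hxp hxq
    · have h := mul_mem (hxinv x hxp hxq) (hTy y hyp hyq)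
      have e : (Equiv.swap p x * Equiv.swap p q) * (Equiv.swap p q * Equiv.swap p y)
          = Equiv.swap p x * Equiv.swap p y := by
        simp [mul_assoc, Equiv.swap_mul_self_mul]
      rwa [e] at h
  -- conjugation identity
  have hconj : ∀ u v : Ω, u ≠ p → v ≠ p → v ≠ u →
      Equiv.swap u v = Equiv.swap p u * Equiv.swap p v * Equiv.swap p u := by
    intro u v hup hvp hvu
    have h := Equiv.swap_apply_apply (Equiv.swap p u) p v
    rwa [swap_apply_left, swap_apply_of_ne_of_ne hvp hvu,
      Equiv.swap_inv] at h
  -- all products swap a b * swap a c lie in the closure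
  have hC : ∀ a b c : Ω, b ≠ a → c ≠ a →
      Equiv.swap a b * Equiv.swap a c ∈ Subgroup.closure S := by
    intro a b c hba hca
    by_cases hap : a = p
    · subst hap; exact hU b c hba hca
    by_cases hbp : b = p
    · rw [hbp]
      by_cases hcp : c = p
      · rw [hcp, Equiv.swap_mul_self]; exact one_mem _
      · have e : Equiv.swap a p * Equiv.swap a c
            = Equiv.swap p c * Equiv.swap p a := by
          rw [hconj a c hap hcp hca, Equiv.swap_comm a p]
          simp [mul_assoc, Equiv.swap_mul_self_mul]
        rw [e]; exact hU c a hcp hap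
    by_cases hcp : c = p
    · rw [hcp]
      have e : Equiv.swap a b * Equiv.swap a p
          = Equiv.swap p a * Equiv.swap p b := by
        rw [hconj a b hap hbp hba, Equiv.swap_comm a p]
        simp [mul_assoc, Equiv.swap_mul_self, Equiv.swap_mul_self_mul]
      rw [e]; exact hU a b hap hbp
    · have e : Equiv.swap a b * Equiv.swap a c
          = (Equiv.swap p a * Equiv.swap p b) * (Equiv.swap p c * Equiv.swap p a) := by
        rw [hconj a b hap hbp hba, hconj a c hap hcp hca]
        simp [mul_assoc, Equiv.swap_mul_self_mul]
      rw [e]; exact mul_mem (hU a b hap hbp) (hU c a hcp hap)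
  -- conclude via three-cycles
  rw [← Equiv.Perm.closure_three_cycles_eq_alternating, Subgroup.closure_le]
  intro σ hσ
  obtain ⟨a, b, c, hba, hca, rfl⟩ := threeCycle_decomp hσ
  exact hC a b c hba hca
end
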